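/- arXiv:1201.1265 — 3 statements merged into one kernel-verified Lean document; each statement's English description precedes it below -/
import Mathlib

section
/- Under the hypotheses of the main theorem, if ‖x − x*‖ < min{ν, κ}, then F'(x)*F'(x) is invertible and ‖F'(x)†‖ ≤ β / |f'(‖x − x*‖)|. -/
/-!
By the open mapping theorem `F'(x*)` is bounded below, so `F'(x*)*F'(x*)` is coercive, hence
invertible, and `F'(x*)†` is a left inverse of `F'(x*)`: `‖u‖ ≤ β ‖F'(x*) u‖`. The majorant
condition at `τ = 0` gives `β ‖F'(x) - F'(x*)‖ ≤ 1 + f'(‖x - x*‖) = 1 - |f'(‖x - x*‖)|`, so the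
perturbation `F'(x)` is bounded below with constant `β / |f'(‖x - x*‖)|`. Finally an operator with
`‖u‖ ≤ K ‖A u‖` has `‖A†‖ ≤ K`, because `A A†` is a contraction (the projection onto `range A`).
-/

/-- Moore–Penrose inverse of an injective closed-range operator: A† = (A*A)⁻¹ A*. -/
noncomputable def pinv {X Y : Type*} [NormedAddCommGroup X] [InnerProductSpace ℝ X]
    [CompleteSpace X] [NormedAddCommGroup Y] [InnerProductSpace ℝ Y] [CompleteSpace Y]
    (A : X →L[ℝ] Y) : Y →L[ℝ] X :=
  (Ring.inverse ((ContinuousLinearMap.adjoint A).comp A)).comp (ContinuousLinearMap.adjoint A)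

open ContinuousLinearMap
open scoped NNReal InnerProductSpace

theorem ContinuousLinearMap.antilipschitz_of_norm_sub_le {𝕜 E F : Type*}
    [NontriviallyNormedField 𝕜] [NormedAddCommGroup E] [NormedSpace 𝕜 E] [NormedAddCommGroup F]
    [NormedSpace 𝕜 F] {A B : E →L[𝕜] F} {K s : ℝ≥0}
    (hA : AntilipschitzWith K A) (hs : 0 < s) (hBA : K * ‖B - A‖ ≤ 1 - s) :
    AntilipschitzWith (K / s) B := by
  refine B.antilipschitz_of_bound fun u => ?_
  have hAu : ‖A u‖ ≤ ‖B u‖ + ‖B - A‖ * ‖u‖ := by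
    calc ‖A u‖ = ‖B u - (B - A) u‖ := by simp
      _ ≤ ‖B u‖ + ‖(B - A) u‖ := norm_sub_le _ _
      _ ≤ ‖B u‖ + ‖B - A‖ * ‖u‖ := by gcongr; exact (B - A).le_opNorm u
  have hsu : s * ‖u‖ ≤ K * ‖B u‖ := by
    have := A.bound_of_antilipschitz hA u
    nlinarith [mul_le_mul_of_nonneg_left hAu K.coe_nonneg, norm_nonneg u]
  rw [NNReal.coe_div, div_mul_eq_mul_div, le_div_iff₀ (by exact_mod_cast hs)]
  linarith

section Hilbert

variable {X Y : Type*} [NormedAddCommGroup X] [InnerProductSpace ℝ X] [CompleteSpace X]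
  [NormedAddCommGroup Y] [InnerProductSpace ℝ Y] [CompleteSpace Y] {A : X →L[ℝ] Y}

theorem isUnit_adjoint_comp_self_of_antilipschitz {K : ℝ≥0} (hA : AntilipschitzWith K A) :
    IsUnit (adjoint A ∘L A) := by
  refine isUnit_of_forall_le_norm_inner_map _ (c := (K + 1)⁻¹ ^ 2) (by positivity) fun u => ?_
  have hu : ‖u‖ ≤ (K + 1) * ‖A u‖ :=
    (A.bound_of_antilipschitz hA u).trans (by gcongr; simp)
  have hAu := apply_norm_sq_eq_inner_adjoint_left A u
  rw [RCLike.re_to_real] at hAu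
  rw [← hAu, Real.norm_of_nonneg (sq_nonneg _), NNReal.coe_pow, ← mul_pow, NNReal.coe_inv,
    NNReal.coe_add, NNReal.coe_one, ← div_eq_mul_inv]
  gcongr
  rwa [div_le_iff₀ (by positivity), mul_comm]

theorem pinv_comp_self (h : IsUnit (adjoint A ∘L A)) : pinv A ∘L A = .id ℝ X :=
  Ring.inverse_mul_cancel _ h

theorem adjoint_comp_self_comp_pinv (h : IsUnit (adjoint A ∘L A)) :
    adjoint A ∘L A ∘L pinv A = adjoint A := by
  rw [pinv, ← comp_assoc, ← comp_assoc]
  exact congrArg (· ∘L adjoint A) (Ring.mul_inverse_cancel _ h)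

theorem antilipschitz_of_isUnit_adjoint_comp_self (h : IsUnit (adjoint A ∘L A)) :
    AntilipschitzWith ‖pinv A‖₊ A :=
  A.antilipschitz_of_bound fun u => by
    simpa [← comp_apply, pinv_comp_self h] using (pinv A).le_opNorm (A u)

theorem norm_apply_pinv_le (h : IsUnit (adjoint A ∘L A)) (y : Y) : ‖A (pinv A y)‖ ≤ ‖y‖ := by
  set u := pinv A y
  have hu : adjoint A (A u) = adjoint A y := congr($(adjoint_comp_self_comp_pinv h) y)
  have hsq : ‖A u‖ ^ 2 ≤ ‖y‖ * ‖A u‖ :=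
    calc ‖A u‖ ^ 2 = ⟪A u, A u⟫_ℝ := (real_inner_self_eq_norm_sq _).symm
      _ = ⟪adjoint A (A u), u⟫_ℝ := (adjoint_inner_left _ _ _).symm
      _ = ⟪y, A u⟫_ℝ := by rw [hu, adjoint_inner_left]
      _ ≤ ‖y‖ * ‖A u‖ := real_inner_le_norm _ _
  nlinarith [norm_nonneg (A u), norm_nonneg y]

theorem norm_pinv_le_of_antilipschitz {K : ℝ≥0} (hA : AntilipschitzWith K A) :
    ‖pinv A‖ ≤ K :=
  (pinv A).opNorm_le_bound K.coe_nonneg fun y =>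
    (A.bound_of_antilipschitz hA _).trans <|
      by gcongr; exact norm_apply_pinv_le (isUnit_adjoint_comp_self_of_antilipschitz hA) y

end Hilbert

theorem neg_of_lt_sSup_setOf_neg {g : ℝ → ℝ} {R t : ℝ} (hg : MonotoneOn g (Set.Ico 0 R))
    (ht : 0 ≤ t) (hlt : t < sSup {s ∈ Set.Ico 0 R | g s < 0}) : g t < 0 := by
  rcases Set.eq_empty_or_nonempty {s ∈ Set.Ico 0 R | g s < 0} with hS | hS
  · rw [hS, Real.sSup_empty] at hlt
    exact absurd ht hlt.not_ge
  obtain ⟨s, ⟨hsR, hgs⟩, hts⟩ := exists_lt_of_lt_csSup hS hlt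
  exact (hg ⟨ht, hts.trans hsR.2⟩ hsR hts.le).trans_lt hgs

theorem stmt9_general
    {X Y : Type*} [NormedAddCommGroup X] [InnerProductSpace ℝ X] [CompleteSpace X]
    [NormedAddCommGroup Y] [InnerProductSpace ℝ Y] [CompleteSpace Y]
    (Ω : Set X) (Fp : X → X →L[ℝ] Y)
    (hclosed : ∀ x ∈ Ω, IsClosed (Set.range ((Fp x) : X → Y)))
    (xs : X) (hxs : xs ∈ Ω) (hinj : Function.Injective ((Fp xs) : X → Y))
    (R : ℝ)
    (β κ : ℝ) (hβ : β = ‖pinv (Fp xs)‖)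
    (fp : ℝ → ℝ)
    (hmaj : ∀ τ ∈ Set.Icc (0:ℝ) 1, ∀ x ∈ Metric.ball xs κ,
      β * ‖Fp x - Fp (xs + τ • (x - xs))‖ ≤ fp ‖x - xs‖ - fp (τ * ‖x - xs‖))
    (hfp0 : fp 0 = -1) (hmono : StrictMonoOn fp (Set.Ico 0 R))
    (ν : ℝ) (hν : ν = sSup {t ∈ Set.Ico 0 R | fp t < 0})
    (x : X) (hx : ‖x - xs‖ < min ν κ) :
    IsUnit ((ContinuousLinearMap.adjoint (Fp x)).comp (Fp x)) ∧
      ‖pinv (Fp x)‖ ≤ β / |fp ‖x - xs‖| := by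
  set t := ‖x - xs‖
  have hfpt : fp t < 0 :=
    neg_of_lt_sSup_setOf_neg hmono.monotoneOn (norm_nonneg _) (hν ▸ hx.trans_le (min_le_left _ _))
  have hxκ : x ∈ Metric.ball xs κ := mem_ball_iff_norm.2 (hx.trans_le (min_le_right _ _))
  have hclose : β * ‖Fp x - Fp xs‖ ≤ 1 - |fp t| := by
    have h := hmaj 0 (by simp) x hxκ
    simp only [zero_smul, add_zero, zero_mul, hfp0] at h
    rw [abs_of_neg hfpt]
    linarith
  obtain ⟨K, hK⟩ := (Fp xs).antilipschitz_of_injective_of_isClosed_range hinj (hclosed xs hxs)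
  have hB : AntilipschitzWith (‖pinv (Fp xs)‖₊ / ‖fp t‖₊) (Fp x) :=
    antilipschitz_of_norm_sub_le
      (antilipschitz_of_isUnit_adjoint_comp_self (isUnit_adjoint_comp_self_of_antilipschitz hK))
      (by simpa using hfpt.ne) (by simpa [hβ] using hclose)
  refine ⟨isUnit_adjoint_comp_self_of_antilipschitz hB, ?_⟩
  simpa [hβ] using norm_pinv_le_of_antilipschitz hB

theorem stmt9
    {X Y : Type*} [NormedAddCommGroup X] [InnerProductSpace ℝ X] [CompleteSpace X]
    [NormedAddCommGroup Y] [InnerProductSpace ℝ Y] [CompleteSpace Y]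
    (Ω : Set X) (hΩ : IsOpen Ω) (F : X → Y) (Fp : X → X →L[ℝ] Y)
    (hF : ∀ x ∈ Ω, HasFDerivAt F (Fp x) x)
    (hclosed : ∀ x ∈ Ω, IsClosed (Set.range ((Fp x) : X → Y)))
    (xs : X) (hxs : xs ∈ Ω) (hFxs : F xs = 0) (hinj : Function.Injective ((Fp xs) : X → Y))
    (R : ℝ) (hR : 0 < R)
    (β κ : ℝ) (hβ : β = ‖pinv (Fp xs)‖)
    (hκ : κ = sSup {t ∈ Set.Ico 0 R | Metric.ball xs t ⊆ Ω})
    (f fp : ℝ → ℝ)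
    (hderiv : ∀ t ∈ Set.Ico (0:ℝ) R, HasDerivWithinAt f (fp t) (Set.Ico 0 R) t)
    (hcont : ContinuousOn fp (Set.Ico 0 R))
    (hmaj : ∀ τ ∈ Set.Icc (0:ℝ) 1, ∀ x ∈ Metric.ball xs κ,
      β * ‖Fp x - Fp (xs + τ • (x - xs))‖ ≤ fp ‖x - xs‖ - fp (τ * ‖x - xs‖))
    (hf0 : f 0 = 0) (hfp0 : fp 0 = -1) (hmono : StrictMonoOn fp (Set.Ico 0 R))
    (ν : ℝ) (hν : ν = sSup {t ∈ Set.Ico 0 R | fp t < 0})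
    (x : X) (hx : ‖x - xs‖ < min ν κ) :
    IsUnit ((ContinuousLinearMap.adjoint (Fp x)).comp (Fp x)) ∧
      ‖pinv (Fp x)‖ ≤ β / |fp ‖x - xs‖| :=
  stmt9_general Ω Fp hclosed xs hxs hinj R β κ hβ fp hmaj hfp0 hmono ν hν x hx
end

section
/- Under the hypotheses of the main theorem, the Gauss–Newton map G_F(x) = x − F'(x)†F(x) satisfies ‖G_F(x) − x*‖ ≤ |n_f(‖x − x*‖)| for all x ∈ B(x*, r), and consequently G_F maps B(x*, r) into itself. -/
/-!
Since `F'(x)†` is a left inverse of `F'(x)`, the Gauss–Newton step satisfies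
`G_F(x) - x* = F'(x)† (F'(x) (x - x*) - F(x))`. With `t = ‖x - x*‖`, the majorant condition at
`τ = 0` and a Banach-type perturbation argument give `‖F'(x)† y‖ ≤ β / (-f'(t)) ‖y‖`, while the
mean value inequality, comparing `F` on the segment `[x*, x]` with `f` on `[0, t]`, gives
`β ‖F(x) - F'(x) (x - x*)‖ ≤ t f'(t) - f(t)`. Together, `‖G_F(x) - x*‖ ≤ -n_f(t)`, and the
definition of `ρ` makes `-n_f(t) ≤ t`.
-/

open Set Metric ContinuousLinearMap

theorem Real.exists_lt_of_nonneg_lt_sSup {s : Set ℝ} {b : ℝ} (hb : 0 ≤ b) (h : b < sSup s) :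
    ∃ a ∈ s, b < a := by
  refine exists_lt_of_lt_csSup (nonempty_iff_ne_empty.mpr fun hs => ?_) h
  rw [hs, Real.sSup_empty] at h
  linarith

theorem ball_sSup_subset {X : Type*} [PseudoMetricSpace X] {Ω : Set X} (x₀ : X) (R : ℝ) :
    ball x₀ (sSup {t ∈ Ico 0 R | ball x₀ t ⊆ Ω}) ⊆ Ω := fun y hy => by
  obtain ⟨t, ⟨-, ht⟩, hyt⟩ := Real.exists_lt_of_nonneg_lt_sSup dist_nonneg hy
  exact ht hyt

theorem lt_and_neg_of_lt_sSup_neg {fp : ℝ → ℝ} {R t : ℝ} (hmono : StrictMonoOn fp (Ico 0 R))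
    (ht : 0 ≤ t) (h : t < sSup {s ∈ Ico 0 R | fp s < 0}) : t < R ∧ fp t < 0 := by
  obtain ⟨s, ⟨hs, hfs⟩, hts⟩ := Real.exists_lt_of_nonneg_lt_sSup ht h
  have htR : t < R := hts.trans hs.2
  exact ⟨htR, (hmono ⟨ht, htR⟩ hs hts).trans hfs⟩

theorem lt_and_newton_le_of_lt_sSup {f fp : ℝ → ℝ} {ν t : ℝ} (hf0 : f 0 = 0) (ht : 0 ≤ t)
    (h : t < sSup {δ : ℝ | δ ∈ Ioo 0 ν ∧ ∀ s ∈ Ioo 0 δ, (f s / fp s - s) / s < 1}) :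
    t < ν ∧ f t / fp t - t ≤ t := by
  obtain ⟨δ, ⟨hδ, hratio⟩, htδ⟩ := Real.exists_lt_of_nonneg_lt_sSup ht h
  refine ⟨htδ.trans hδ.2, ?_⟩
  rcases ht.eq_or_lt with rfl | ht
  · simp [hf0]
  · exact ((div_lt_one ht).mp (hratio t ⟨ht, htδ⟩)).le

section PseudoInverse

variable {X Y : Type*} [NormedAddCommGroup X] [InnerProductSpace ℝ X] [CompleteSpace X]
  [NormedAddCommGroup Y] [InnerProductSpace ℝ Y] [CompleteSpace Y] {A : X →L[ℝ] Y} {K : ℝ}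

theorem isUnit_adjoint_comp_self_of_norm_le (hK : ∀ u, ‖u‖ ≤ K * ‖A u‖) :
    IsUnit (adjoint A ∘L A) := by
  have hK' : ∀ u, ‖u‖ ≤ (|K| + 1) * ‖A u‖ := fun u =>
    (hK u).trans (mul_le_mul_of_nonneg_right ((le_abs_self K).trans (by linarith)) (norm_nonneg _))
  have hpos : (0 : ℝ) < ((|K| + 1) ^ 2)⁻¹ := by positivity
  refine isUnit_of_forall_le_norm_inner_map _ (c := ⟨_, hpos.le⟩) hpos fun u => ?_
  change ‖u‖ ^ 2 * ((|K| + 1) ^ 2)⁻¹ ≤ ‖inner ℝ (adjoint A (A u)) u‖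
  rw [adjoint_inner_left, real_inner_self_eq_norm_sq, Real.norm_of_nonneg (sq_nonneg _),
    ← div_eq_mul_inv, div_le_iff₀ (by positivity), ← mul_pow, mul_comm]
  exact pow_le_pow_left₀ (norm_nonneg u) (hK' u) 2

theorem pinv_apply_apply (hK : ∀ u, ‖u‖ ≤ K * ‖A u‖) (u : X) : pinv A (A u) = u :=
  DFunLike.congr_fun (Ring.inverse_mul_cancel _ (isUnit_adjoint_comp_self_of_norm_le hK)) u

/-- `A (pinv A y)` is the orthogonal projection of `y` onto the range of `A`, so its norm is at
most `‖y‖`. -/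
theorem norm_pinv_apply_le (hK0 : 0 ≤ K) (hK : ∀ u, ‖u‖ ≤ K * ‖A u‖) (y : Y) :
    ‖pinv A y‖ ≤ K * ‖y‖ := by
  set u := pinv A y
  have hnormal : adjoint A (A u) = adjoint A y :=
    DFunLike.congr_fun
      (Ring.mul_inverse_cancel _ (isUnit_adjoint_comp_self_of_norm_le hK)) (adjoint A y)
  have hAu : ‖A u‖ ≤ ‖y‖ := by
    have h : ‖A u‖ ^ 2 ≤ ‖y‖ * ‖A u‖ := by
      calc ‖A u‖ ^ 2 = inner ℝ (adjoint A (A u)) u := by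
            rw [adjoint_inner_left, real_inner_self_eq_norm_sq]
        _ = inner ℝ y (A u) := by rw [hnormal, adjoint_inner_left]
        _ ≤ ‖y‖ * ‖A u‖ := real_inner_le_norm _ _
    nlinarith [norm_nonneg (A u), norm_nonneg y]
  exact (hK u).trans (mul_le_mul_of_nonneg_left hAu hK0)

theorem norm_le_norm_pinv_mul (hinj : Function.Injective A) (hclosed : IsClosed (range A))
    (u : X) : ‖u‖ ≤ ‖pinv A‖ * ‖A u‖ := by
  obtain ⟨K, hK⟩ := A.antilipschitz_of_injective_of_isClosed_range hinj hclosed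
  calc ‖u‖ = ‖pinv A (A u)‖ := by rw [pinv_apply_apply (A.bound_of_antilipschitz hK)]
    _ ≤ ‖pinv A‖ * ‖A u‖ := le_opNorm _ _

theorem norm_sub_pinv_apply_sub_le (hK0 : 0 ≤ K) (hK : ∀ u, ‖u‖ ≤ K * ‖A u‖) (x x₀ : X)
    (y : Y) : ‖x - pinv A y - x₀‖ ≤ K * ‖y - A (x - x₀)‖ := by
  have h : x - pinv A y - x₀ = pinv A (A (x - x₀) - y) := by
    rw [map_sub, pinv_apply_apply hK]; abel
  rw [h, norm_sub_rev]
  exact norm_pinv_apply_le hK0 hK _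

end PseudoInverse

section

variable {E F : Type*} [NormedAddCommGroup E] [NormedSpace ℝ E] [NormedAddCommGroup F]
  [NormedSpace ℝ F]

theorem norm_le_div_mul_of_norm_sub_le {A B : E →L[ℝ] F} {β q : ℝ} (hβ : 0 ≤ β) (hq : q < 1)
    (hA : ∀ u, ‖u‖ ≤ β * ‖A u‖) (hAB : β * ‖B - A‖ ≤ q) (u : E) :
    ‖u‖ ≤ β / (1 - q) * ‖B u‖ := by
  have hdiff : β * ‖A u - B u‖ ≤ q * ‖u‖ := by
    calc β * ‖A u - B u‖ = β * ‖(B - A) u‖ := by rw [sub_apply, norm_sub_rev]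
      _ ≤ β * (‖B - A‖ * ‖u‖) := mul_le_mul_of_nonneg_left (le_opNorm _ _) hβ
      _ ≤ q * ‖u‖ := by rw [← mul_assoc]; exact mul_le_mul_of_nonneg_right hAB (norm_nonneg u)
  have htri : β * ‖A u‖ ≤ β * ‖A u - B u‖ + β * ‖B u‖ := by
    rw [← mul_add]; exact mul_le_mul_of_nonneg_left (norm_le_norm_sub_add _ _) hβ
  rw [div_mul_eq_mul_div, le_div_iff₀ (by linarith)]
  nlinarith [hA u]

theorem norm_sub_sub_fderiv_le_of_majorant {G : E → F} {G' : E → E →L[ℝ] F} {f f' : ℝ → ℝ}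
    {x₀ x : E} {β : ℝ} (hβ : 0 ≤ β)
    (hG : ∀ τ ∈ Icc (0 : ℝ) 1, HasFDerivAt G (G' (x₀ + τ • (x - x₀))) (x₀ + τ • (x - x₀)))
    (hf : ∀ s ∈ Icc 0 ‖x - x₀‖, HasDerivWithinAt f (f' s) (Icc 0 ‖x - x₀‖) s)
    (hmaj : ∀ τ ∈ Icc (0 : ℝ) 1,
      β * ‖G' x - G' (x₀ + τ • (x - x₀))‖ ≤ f' ‖x - x₀‖ - f' (τ * ‖x - x₀‖)) :
    β * ‖G x - G x₀ - G' x (x - x₀)‖ ≤ ‖x - x₀‖ * f' ‖x - x₀‖ - (f ‖x - x₀‖ - f 0) := by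
  set d := x - x₀
  set t := ‖d‖
  set ψ : ℝ → F := fun τ => β • (G (x₀ + τ • d) - G x₀ - τ • G' x d)
  -- the scalar majorant of `‖ψ‖` along the segment, normalised so that `B 0 = ‖ψ 0‖ = 0`
  set B : ℝ → ℝ := fun τ => τ * t * f' t - (f (τ * t) - f 0)
  have hψ : ∀ τ ∈ Icc (0 : ℝ) 1,
      HasDerivAt ψ (β • (G' (x₀ + τ • d) d - G' x d)) τ := by
    intro τ hτ
    have hline : HasDerivAt (fun s : ℝ => x₀ + s • d) d τ := by
      simpa using ((hasDerivAt_id τ).smul_const d).const_add x₀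
    exact ((((hG τ hτ).comp_hasDerivAt τ hline).sub_const (G x₀)).sub
      (by simpa using (hasDerivAt_id τ).smul_const (G' x d))).const_smul β
  have hscale : MapsTo (fun τ : ℝ => τ * t) (Icc 0 1) (Icc 0 t) := fun τ hτ =>
    ⟨mul_nonneg hτ.1 (norm_nonneg d), mul_le_of_le_one_left (norm_nonneg d) hτ.2⟩
  have hB : ∀ τ ∈ Icc (0 : ℝ) 1,
      HasDerivWithinAt B (t * f' t - f' (τ * t) * t) (Icc 0 1) τ := by
    intro τ hτ
    have hfτ := (hf _ (hscale hτ)).comp τ (hasDerivAt_mul_const t).hasDerivWithinAt hscale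
    exact (((hasDerivAt_mul_const t).mul_const (f' t)).hasDerivWithinAt.sub
      (hfτ.sub_const (f 0)))
  have hbound : ∀ τ ∈ Ico (0 : ℝ) 1,
      ‖β • (G' (x₀ + τ • d) d - G' x d)‖ ≤ t * f' t - f' (τ * t) * t := by
    intro τ hτ
    calc ‖β • (G' (x₀ + τ • d) d - G' x d)‖ = β * ‖(G' x - G' (x₀ + τ • d)) d‖ := by
          rw [norm_smul, Real.norm_of_nonneg hβ, sub_apply, norm_sub_rev]
      _ ≤ β * (‖G' x - G' (x₀ + τ • d)‖ * t) := mul_le_mul_of_nonneg_left (le_opNorm _ _) hβ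
      _ ≤ (f' t - f' (τ * t)) * t := by
          rw [← mul_assoc]
          exact mul_le_mul_of_nonneg_right (hmaj τ ⟨hτ.1, hτ.2.le⟩) (norm_nonneg d)
      _ = t * f' t - f' (τ * t) * t := by ring
  have h := image_norm_le_of_norm_deriv_right_le_deriv_boundary'
    (fun τ hτ => (hψ τ hτ).continuousAt.continuousWithinAt)
    (fun τ hτ => (hψ τ ⟨hτ.1, hτ.2.le⟩).hasDerivWithinAt)
    (by simp [ψ, B]) (fun τ hτ => (hB τ hτ).continuousWithinAt)
    (fun τ hτ => (hB τ ⟨hτ.1, hτ.2.le⟩).mono_of_mem_nhdsWithin (Icc_mem_nhdsGE_of_mem hτ))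
    hbound (right_mem_Icc.mpr zero_le_one)
  simpa [ψ, B, d, norm_smul, Real.norm_of_nonneg hβ] using h

end

theorem norm_gaussNewton_sub_le_of_majorant {X Y : Type*} [NormedAddCommGroup X]
    [InnerProductSpace ℝ X] [CompleteSpace X] [NormedAddCommGroup Y] [InnerProductSpace ℝ Y]
    [CompleteSpace Y] {F : X → Y} {Fp : X → X →L[ℝ] Y} {f fp : ℝ → ℝ} {xs x : X} {β : ℝ}
    (hβ0 : 0 ≤ β) (hβ : ∀ u, ‖u‖ ≤ β * ‖Fp xs u‖)
    (hF : ∀ τ ∈ Icc (0 : ℝ) 1, HasFDerivAt F (Fp (xs + τ • (x - xs))) (xs + τ • (x - xs)))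
    (hf : ∀ s ∈ Icc 0 ‖x - xs‖, HasDerivWithinAt f (fp s) (Icc 0 ‖x - xs‖) s)
    (hmaj : ∀ τ ∈ Icc (0 : ℝ) 1,
      β * ‖Fp x - Fp (xs + τ • (x - xs))‖ ≤ fp ‖x - xs‖ - fp (τ * ‖x - xs‖))
    (hFxs : F xs = 0) (hf0 : f 0 = 0) (hfp0 : fp 0 = -1) (hneg : fp ‖x - xs‖ < 0) :
    ‖x - pinv (Fp x) (F x) - xs‖ ≤ f ‖x - xs‖ / fp ‖x - xs‖ - ‖x - xs‖ := by
  set t := ‖x - xs‖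
  have hnear : β * ‖Fp x - Fp xs‖ ≤ fp t + 1 := by
    simpa [hfp0] using hmaj 0 ⟨le_rfl, zero_le_one⟩
  have hK : ∀ u, ‖u‖ ≤ β / -fp t * ‖Fp x u‖ := by
    simpa using norm_le_div_mul_of_norm_sub_le hβ0 (by linarith) hβ hnear
  have hlin := norm_sub_sub_fderiv_le_of_majorant hβ0 hF hf hmaj
  rw [hFxs, hf0, sub_zero, sub_zero] at hlin
  calc ‖x - pinv (Fp x) (F x) - xs‖ ≤ β / -fp t * ‖F x - Fp x (x - xs)‖ :=
        norm_sub_pinv_apply_sub_le (div_nonneg hβ0 (by linarith)) hK x xs (F x)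
    _ = β * ‖F x - Fp x (x - xs)‖ / -fp t := by ring
    _ ≤ (t * fp t - f t) / -fp t := by gcongr; linarith
    _ = f t / fp t - t := by field_simp [hneg.ne]; ring

theorem stmt11_general
    {X Y : Type*} [NormedAddCommGroup X] [InnerProductSpace ℝ X] [CompleteSpace X]
    [NormedAddCommGroup Y] [InnerProductSpace ℝ Y] [CompleteSpace Y]
    (Ω : Set X) (F : X → Y) (Fp : X → X →L[ℝ] Y)
    (hF : ∀ x ∈ Ω, HasFDerivAt F (Fp x) x)
    (hclosed : ∀ x ∈ Ω, IsClosed (Set.range ((Fp x) : X → Y)))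
    (xs : X) (hxs : xs ∈ Ω) (hFxs : F xs = 0) (hinj : Function.Injective ((Fp xs) : X → Y))
    (R : ℝ)
    (β κ : ℝ) (hβ : β = ‖pinv (Fp xs)‖)
    (hκ : κ = sSup {t ∈ Set.Ico 0 R | Metric.ball xs t ⊆ Ω})
    (f fp : ℝ → ℝ)
    (hderiv : ∀ t ∈ Set.Ico (0:ℝ) R, HasDerivWithinAt f (fp t) (Set.Ico 0 R) t)
    (hmaj : ∀ τ ∈ Set.Icc (0:ℝ) 1, ∀ x ∈ Metric.ball xs κ,
      β * ‖Fp x - Fp (xs + τ • (x - xs))‖ ≤ fp ‖x - xs‖ - fp (τ * ‖x - xs‖))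
    (hf0 : f 0 = 0) (hfp0 : fp 0 = -1) (hmono : StrictMonoOn fp (Set.Ico 0 R))
    (ν ρ r : ℝ) (hν : ν = sSup {t ∈ Set.Ico 0 R | fp t < 0})
    (hρ : ρ = sSup {δ : ℝ | δ ∈ Set.Ioo 0 ν ∧ ∀ t ∈ Set.Ioo 0 δ, (f t / fp t - t) / t < 1})
    (hr : r = min κ ρ) :
    (∀ x ∈ Metric.ball xs r,
        ‖(x - pinv (Fp x) (F x)) - xs‖ ≤ |‖x - xs‖ - f ‖x - xs‖ / fp ‖x - xs‖|) ∧
      ∀ x ∈ Metric.ball xs r, x - pinv (Fp x) (F x) ∈ Metric.ball xs r := by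
  have hβA : ∀ u, ‖u‖ ≤ β * ‖Fp xs u‖ := hβ ▸ norm_le_norm_pinv_mul hinj (hclosed xs hxs)
  have hballΩ : ball xs κ ⊆ Ω := hκ ▸ ball_sSup_subset xs R
  have key : ∀ x ∈ ball xs r, ‖x - pinv (Fp x) (F x) - xs‖ ≤ f ‖x - xs‖ / fp ‖x - xs‖ - ‖x - xs‖
      ∧ f ‖x - xs‖ / fp ‖x - xs‖ - ‖x - xs‖ ≤ ‖x - xs‖ := by
    intro x hx
    have hxκ : x ∈ ball xs κ := ball_subset_ball (hr ▸ min_le_left _ _) hx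
    obtain ⟨htν, hnewton⟩ := lt_and_newton_le_of_lt_sSup hf0 (norm_nonneg _)
      (hρ ▸ (mem_ball_iff_norm.mp hx).trans_le (hr ▸ min_le_right _ _))
    obtain ⟨htR, hneg⟩ := lt_and_neg_of_lt_sSup_neg hmono (norm_nonneg _) (hν ▸ htν)
    have hseg : ∀ τ ∈ Icc (0 : ℝ) 1, xs + τ • (x - xs) ∈ ball xs κ := fun τ hτ =>
      (convex_ball xs κ).add_smul_sub_mem (mem_ball_self (pos_of_mem_ball hxκ)) hxκ hτ
    refine ⟨norm_gaussNewton_sub_le_of_majorant (hβ ▸ norm_nonneg _) hβA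
      (fun τ hτ => hF _ (hballΩ (hseg τ hτ)))
      (fun s hs => (hderiv s ⟨hs.1, hs.2.trans_lt htR⟩).mono (Icc_subset_Ico_right htR))
      (fun τ hτ => hmaj τ hτ x hxκ) hFxs hf0 hfp0 hneg, hnewton⟩
  refine ⟨fun x hx => (key x hx).1.trans ?_, fun x hx => ?_⟩
  · have := neg_le_abs (‖x - xs‖ - f ‖x - xs‖ / fp ‖x - xs‖)
    linarith
  · exact mem_ball_iff_norm.mpr ((key x hx).1.trans_lt
      ((key x hx).2.trans_lt (mem_ball_iff_norm.mp hx)))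

theorem stmt11
    {X Y : Type*} [NormedAddCommGroup X] [InnerProductSpace ℝ X] [CompleteSpace X]
    [NormedAddCommGroup Y] [InnerProductSpace ℝ Y] [CompleteSpace Y]
    (Ω : Set X) (hΩ : IsOpen Ω) (F : X → Y) (Fp : X → X →L[ℝ] Y)
    (hF : ∀ x ∈ Ω, HasFDerivAt F (Fp x) x)
    (hclosed : ∀ x ∈ Ω, IsClosed (Set.range ((Fp x) : X → Y)))
    (xs : X) (hxs : xs ∈ Ω) (hFxs : F xs = 0) (hinj : Function.Injective ((Fp xs) : X → Y))
    (R : ℝ) (hR : 0 < R)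
    (β κ : ℝ) (hβ : β = ‖pinv (Fp xs)‖)
    (hκ : κ = sSup {t ∈ Set.Ico 0 R | Metric.ball xs t ⊆ Ω})
    (f fp : ℝ → ℝ)
    (hderiv : ∀ t ∈ Set.Ico (0:ℝ) R, HasDerivWithinAt f (fp t) (Set.Ico 0 R) t)
    (hcont : ContinuousOn fp (Set.Ico 0 R))
    (hmaj : ∀ τ ∈ Set.Icc (0:ℝ) 1, ∀ x ∈ Metric.ball xs κ,
      β * ‖Fp x - Fp (xs + τ • (x - xs))‖ ≤ fp ‖x - xs‖ - fp (τ * ‖x - xs‖))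
    (hf0 : f 0 = 0) (hfp0 : fp 0 = -1) (hmono : StrictMonoOn fp (Set.Ico 0 R))
    (ν ρ r : ℝ) (hν : ν = sSup {t ∈ Set.Ico 0 R | fp t < 0})
    (hρ : ρ = sSup {δ : ℝ | δ ∈ Set.Ioo 0 ν ∧ ∀ t ∈ Set.Ioo 0 δ, (f t / fp t - t) / t < 1})
    (hr : r = min κ ρ) :
    (∀ x ∈ Metric.ball xs r,
        ‖(x - pinv (Fp x) (F x)) - xs‖ ≤ |‖x - xs‖ - f ‖x - xs‖ / fp ‖x - xs‖|) ∧
      ∀ x ∈ Metric.ball xs r, x - pinv (Fp x) (F x) ∈ Metric.ball xs r :=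
  stmt11_general Ω F Fp hF hclosed xs hxs hFxs hinj R β κ hβ hκ f fp hderiv hmaj hf0 hfp0 hmono ν ρ
    r hν hρ hr
end

section
/- Under the hypotheses of the main theorem, x* is the unique zero of F in the ball B(x*, σ), where σ := sup{t ∈ (0,κ) : f(t) < 0}. -/
/-!
If `F y = 0` with `0 < ρ := ‖y - x*‖ < σ`, the majorant condition at `τ = 0` and the
mean value inequality along the segment from `x*` to `y` bound the linearization error:
`β ‖F y - F x* - F'(x*)(y - x*)‖ ≤ f ρ - f 0 - f'(0) ρ = f ρ + ρ`.
Since `F y = F x* = 0` and `‖v‖ ≤ β ‖F'(x*) v‖` (as `F'(x*)† F'(x*) = 1`), this gives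
`ρ ≤ f ρ + ρ`, i.e. `f ρ ≥ 0`. But `f` is convex with `f 0 = 0` and `f < 0` somewhere beyond `ρ`,
so `f ρ < 0`.
-/

open Set Metric

section PseudoInverse

variable {X Y : Type*} [NormedAddCommGroup X] [InnerProductSpace ℝ X] [CompleteSpace X]
  [NormedAddCommGroup Y] [InnerProductSpace ℝ Y] [CompleteSpace Y]

theorem ContinuousLinearMap.isUnit_adjoint_comp_self {A : X →L[ℝ] Y}
    (hinj : Function.Injective A) (hcl : IsClosed (range A)) :
    IsUnit (ContinuousLinearMap.adjoint A ∘L A) := by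
  obtain ⟨K, hK⟩ := A.antilipschitz_of_injective_of_isClosed_range hinj hcl
  refine ContinuousLinearMap.isUnit_of_forall_le_norm_inner_map _
    (c := (K ^ 2 + 1)⁻¹) (by positivity) fun x => ?_
  rw [comp_apply, adjoint_inner_left, real_inner_self_eq_norm_sq,
    Real.norm_of_nonneg (by positivity), NNReal.coe_inv, ← div_eq_mul_inv,
    div_le_iff₀ (by positivity)]
  have hx := hK.le_mul_norm (map_zero A) x
  have : ‖x‖ ^ 2 ≤ K ^ 2 * ‖A x‖ ^ 2 := by
    rw [← mul_pow]; exact pow_le_pow_left₀ (norm_nonneg x) hx 2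
  push_cast
  nlinarith [sq_nonneg ‖A x‖]

theorem pinv_apply_apply_s12 {A : X →L[ℝ] Y} (hinj : Function.Injective A)
    (hcl : IsClosed (range A)) (v : X) : pinv A (A v) = v := by
  change (Ring.inverse _ * (ContinuousLinearMap.adjoint A ∘L A)) v = v
  rw [Ring.inverse_mul_cancel _ (ContinuousLinearMap.isUnit_adjoint_comp_self hinj hcl)]
  rfl

theorem norm_le_norm_pinv_mul_norm_apply {A : X →L[ℝ] Y} (hinj : Function.Injective A)
    (hcl : IsClosed (range A)) (v : X) : ‖v‖ ≤ ‖pinv A‖ * ‖A v‖ := by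
  simpa only [pinv_apply_apply_s12 hinj hcl] using (pinv A).le_opNorm (A v)

end PseudoInverse

theorem Real.exists_lt_of_nonneg_of_lt_sSup {S : Set ℝ} {a : ℝ} (ha : 0 ≤ a) (h : a < sSup S) :
    ∃ s ∈ S, a < s := by
  rcases S.eq_empty_or_nonempty with rfl | hS
  · rw [Real.sSup_empty] at h
    exact absurd h ha.not_gt
  · exact exists_lt_of_lt_csSup hS h

theorem convexOn_of_hasDerivWithinAt_of_monotoneOn {D : Set ℝ} (hD : Convex ℝ D) {f f' : ℝ → ℝ}
    (hf : ∀ t ∈ D, HasDerivWithinAt f (f' t) D t) (hf' : MonotoneOn f' D) : ConvexOn ℝ D f := by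
  have hderiv : ∀ t ∈ interior D, HasDerivAt f (f' t) t := fun t ht =>
    (hf t (interior_subset ht)).hasDerivAt (mem_interior_iff_mem_nhds.1 ht)
  refine MonotoneOn.convexOn_of_deriv hD (fun t ht => (hf t ht).continuousWithinAt)
    (fun t ht => (hderiv t ht).differentiableAt.differentiableWithinAt) ?_
  intro a ha b hb hab
  rw [(hderiv a ha).deriv, (hderiv b hb).deriv]
  exact hf' (interior_subset ha) (interior_subset hb) hab

theorem ConvexOn.neg_of_pos_of_le {D : Set ℝ} {f : ℝ → ℝ} (hf : ConvexOn ℝ D f) (h0 : 0 ∈ D)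
    (hf0 : f 0 = 0) {r s : ℝ} (hr : r ∈ D) (hs : s ∈ D) (hfs : f s < 0) (hr0 : 0 < r)
    (hrs : r ≤ s) : f r < 0 := by
  have hslope := hf.secant_mono h0 hr hs hr0.ne' (hr0.trans_le hrs).ne' hrs
  simp only [hf0, sub_zero] at hslope
  exact neg_of_div_neg_left (hslope.trans_lt (div_neg_of_neg_of_pos hfs (hr0.trans_le hrs))) hr0.le

theorem norm_image_sub_sub_le_of_majorant {E G : Type*} [NormedAddCommGroup E] [NormedSpace ℝ E]
    [NormedAddCommGroup G] [NormedSpace ℝ G] {F : E → G} {F' : E → E →L[ℝ] G} {f f' : ℝ → ℝ}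
    {x u : E} {ρ c : ℝ} (hu : ‖u‖ ≤ 1) (hρ : 0 ≤ ρ) (hc : 0 ≤ c)
    (hF : ∀ s ∈ Icc 0 ρ, HasFDerivAt F (F' (x + s • u)) (x + s • u))
    (hf : ∀ s ∈ Icc 0 ρ, HasDerivWithinAt f (f' s) (Icc 0 ρ) s)
    (hmaj : ∀ s ∈ Icc 0 ρ, c * ‖F' (x + s • u) - F' x‖ ≤ f' s - f' 0) :
    c * ‖F (x + ρ • u) - F x - ρ • F' x u‖ ≤ f ρ - f 0 - ρ * f' 0 := by
  have hφ : ∀ s ∈ Icc 0 ρ, HasDerivAt (fun s : ℝ => c • (F (x + s • u) - F x - s • F' x u))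
      (c • (F' (x + s • u) u - F' x u)) s := by
    intro s hs
    have hpath : HasDerivAt (fun s : ℝ => x + s • u) u s := by
      simpa using ((hasDerivAt_id s).smul_const u).const_add x
    exact ((((hF s hs).comp_hasDerivAt s hpath).sub_const (F x)).sub
      ((hasDerivAt_id s).smul_const (F' x u) |>.congr_deriv (one_smul _ _))).const_smul c
  have hB : ∀ s ∈ Ico 0 ρ,
      HasDerivWithinAt (fun s => f s - f 0 - s * f' 0) (f' s - f' 0) (Ici s) s :=
    fun s hs => (((hf s (Ico_subset_Icc_self hs)).mono_of_mem_nhdsWithin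
      (Icc_mem_nhdsGE_of_mem hs)).sub_const (f 0)).sub ((hasDerivWithinAt_id s _).mul_const (f' 0)
      |>.congr_deriv (one_mul _))
  have hφ_le := image_norm_le_of_norm_deriv_right_le_deriv_boundary'
    (fun s hs => (hφ s hs).continuousAt.continuousWithinAt)
    (fun s hs => (hφ s (Ico_subset_Icc_self hs)).hasDerivWithinAt) (by simp)
    (fun s hs => (hf s hs).continuousWithinAt.sub continuousWithinAt_const |>.sub
      (continuousWithinAt_id.mul continuousWithinAt_const)) hB
    (fun s hs => ?_) (right_mem_Icc.2 hρ)
  · simpa [norm_smul, Real.norm_of_nonneg hc] using hφ_le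
  · calc ‖c • (F' (x + s • u) u - F' x u)‖ = c * ‖(F' (x + s • u) - F' x) u‖ := by
          rw [norm_smul, Real.norm_of_nonneg hc, sub_apply]
      _ ≤ c * ‖F' (x + s • u) - F' x‖ := by
          gcongr
          exact ((F' (x + s • u) - F' x).le_opNorm u).trans
            (mul_le_of_le_one_right (norm_nonneg _) hu)
      _ ≤ f' s - f' 0 := hmaj s (Ico_subset_Icc_self hs)

theorem stmt12_general
    {X Y : Type*} [NormedAddCommGroup X] [InnerProductSpace ℝ X] [CompleteSpace X]
    [NormedAddCommGroup Y] [InnerProductSpace ℝ Y] [CompleteSpace Y]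
    (Ω : Set X) (F : X → Y) (Fp : X → X →L[ℝ] Y)
    (hF : ∀ x ∈ Ω, HasFDerivAt F (Fp x) x)
    (hclosed : ∀ x ∈ Ω, IsClosed (Set.range ((Fp x) : X → Y)))
    (xs : X) (hxs : xs ∈ Ω) (hFxs : F xs = 0) (hinj : Function.Injective ((Fp xs) : X → Y))
    (R : ℝ)
    (β κ : ℝ) (hβ : β = ‖pinv (Fp xs)‖)
    (hκ : κ = sSup {t ∈ Set.Ico 0 R | Metric.ball xs t ⊆ Ω})
    (f fp : ℝ → ℝ)
    (hderiv : ∀ t ∈ Set.Ico (0:ℝ) R, HasDerivWithinAt f (fp t) (Set.Ico 0 R) t)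
    (hmaj : ∀ τ ∈ Set.Icc (0:ℝ) 1, ∀ x ∈ Metric.ball xs κ,
      β * ‖Fp x - Fp (xs + τ • (x - xs))‖ ≤ fp ‖x - xs‖ - fp (τ * ‖x - xs‖))
    (hf0 : f 0 = 0) (hfp0 : fp 0 = -1) (hmono : StrictMonoOn fp (Set.Ico 0 R))
    (σ : ℝ) (hσ : σ = sSup {t ∈ Set.Ioo 0 κ | f t < 0}) :
    ∀ y ∈ Metric.ball xs σ, F y = 0 → y = xs := by
  intro y hy hFy
  by_contra hne
  set ρ := ‖y - xs‖
  have hρ : 0 < ρ := norm_pos_iff.2 (sub_ne_zero.2 hne)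
  obtain ⟨s, ⟨⟨-, hsκ⟩, hfs⟩, hρs⟩ :=
    Real.exists_lt_of_nonneg_of_lt_sSup hρ.le (hσ ▸ mem_ball_iff_norm.1 hy)
  obtain ⟨t, ⟨⟨-, htR⟩, htΩ⟩, hst⟩ :=
    Real.exists_lt_of_nonneg_of_lt_sSup (hρ.le.trans hρs.le) (hκ ▸ hsκ)
  have hconvex := convexOn_of_hasDerivWithinAt_of_monotoneOn (convex_Ico 0 R) hderiv
    hmono.monotoneOn
  have hfρ : f ρ < 0 := hconvex.neg_of_pos_of_le ⟨le_rfl, by linarith⟩ hf0 ⟨hρ.le, by linarith⟩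
    ⟨by linarith, by linarith⟩ hfs hρ hρs.le
  set u := ρ⁻¹ • (y - xs)
  have hu : ‖u‖ = 1 := by
    rw [norm_smul, Real.norm_of_nonneg (inv_nonneg.2 hρ.le), inv_mul_cancel₀ hρ.ne']
  have hseg : ∀ r ∈ Icc 0 ρ, ‖xs + r • u - xs‖ = r := fun r hr => by
    simp [norm_smul, hu, abs_of_nonneg hr.1]
  have hseg_mem : ∀ r ∈ Icc 0 ρ, xs + r • u ∈ ball xs s := fun r hr =>
    mem_ball_iff_norm.2 (by rw [hseg r hr]; exact hr.2.trans_lt hρs)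
  have hrem := norm_image_sub_sub_le_of_majorant (F := F) hu.le hρ.le (hβ ▸ norm_nonneg _)
    (fun r hr => hF _ (htΩ (ball_subset_ball hst.le (hseg_mem r hr))))
    (fun r hr => (hderiv r ⟨hr.1, by linarith [hr.2]⟩).mono (Icc_subset_Ico_right (by linarith)))
    (fun r hr => by
      simpa only [hseg r hr, zero_mul, zero_smul, add_zero] using
        hmaj 0 ⟨le_rfl, zero_le_one⟩ _ (ball_subset_ball hsκ.le (hseg_mem r hr)))
  have hAu : 1 ≤ β * ‖Fp xs u‖ :=
    hβ ▸ hu ▸ norm_le_norm_pinv_mul_norm_apply hinj (hclosed xs hxs) u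
  have hy_eq : xs + ρ • u = y := by simp [u, smul_smul, hρ.ne']
  rw [hy_eq, hFy, hFxs, hf0, hfp0] at hrem
  norm_num [norm_smul, abs_of_pos hρ] at hrem
  nlinarith [mul_le_mul_of_nonneg_left hAu hρ.le]

theorem stmt12
    {X Y : Type*} [NormedAddCommGroup X] [InnerProductSpace ℝ X] [CompleteSpace X]
    [NormedAddCommGroup Y] [InnerProductSpace ℝ Y] [CompleteSpace Y]
    (Ω : Set X) (hΩ : IsOpen Ω) (F : X → Y) (Fp : X → X →L[ℝ] Y)
    (hF : ∀ x ∈ Ω, HasFDerivAt F (Fp x) x)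
    (hclosed : ∀ x ∈ Ω, IsClosed (Set.range ((Fp x) : X → Y)))
    (xs : X) (hxs : xs ∈ Ω) (hFxs : F xs = 0) (hinj : Function.Injective ((Fp xs) : X → Y))
    (R : ℝ) (hR : 0 < R)
    (β κ : ℝ) (hβ : β = ‖pinv (Fp xs)‖)
    (hκ : κ = sSup {t ∈ Set.Ico 0 R | Metric.ball xs t ⊆ Ω})
    (f fp : ℝ → ℝ)
    (hderiv : ∀ t ∈ Set.Ico (0:ℝ) R, HasDerivWithinAt f (fp t) (Set.Ico 0 R) t)
    (hcont : ContinuousOn fp (Set.Ico 0 R))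
    (hmaj : ∀ τ ∈ Set.Icc (0:ℝ) 1, ∀ x ∈ Metric.ball xs κ,
      β * ‖Fp x - Fp (xs + τ • (x - xs))‖ ≤ fp ‖x - xs‖ - fp (τ * ‖x - xs‖))
    (hf0 : f 0 = 0) (hfp0 : fp 0 = -1) (hmono : StrictMonoOn fp (Set.Ico 0 R))
    (σ : ℝ) (hσ : σ = sSup {t ∈ Set.Ioo 0 κ | f t < 0}) :
    ∀ y ∈ Metric.ball xs σ, F y = 0 → y = xs :=
  stmt12_general Ω F Fp hF hclosed xs hxs hFxs hinj R β κ hβ hκ f fp hderiv hmaj hf0 hfp0 hmono σ hσ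
end
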